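/- Let P be a shape-invariant predicate on subsets of V, and let S, S' ⊆ V both satisfy P with |S| = |S'| = k. If there exists a TJ(P)-sequence from S to S', then there exists a TJ(P)-sequence from S to S' of minimum length whose shape sequence σ̄_0, …, σ̄_m consists of pairwise distinct shapes such that σ̄_j and σ̄_{j+1} are adjacent in the size-k shape graph S_k for every 0 ≤ j < m (i.e., the shape sequence forms a simple path in S_k). -/

import Mathlib

/-! Shapes framework: `V` is a finite type partitioned into types `Vp 0, …, Vp (t-1)`;
`q ≥ 1` is a fixed integer. A shape is a function `Fin t → Option ℕ`, where `none`
represents the symbol ⊤. -/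

variable {α : Type*} [DecidableEq α] [Fintype α]

/-- The partition of the vertex set into `t` pairwise disjoint nonempty types. -/
def IsTypePartition {t : ℕ} (Vp : Fin t → Finset α) : Prop :=
  (∀ i, (Vp i).Nonempty) ∧ (∀ i j, i ≠ j → Disjoint (Vp i) (Vp j)) ∧
    (∀ v : α, ∃ i, v ∈ Vp i)

/-- The signature of a set `X`: `sig Vp X i = |V_i ∩ X|`. -/
def sig {t : ℕ} (Vp : Fin t → Finset α) (X : Finset α) (i : Fin t) : ℕ :=
  ((Vp i) ∩ X).card

/-- The (unique) shape of a set `X`: it is `⊤` (i.e. `none`) at `i` when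
`q ≤ |V_i ∩ X| ≤ |V_i| − q`, and `|V_i ∩ X|` otherwise.  A set `X` has shape `σ`
iff `shapeOf q Vp X = σ`. -/
def shapeOf {t : ℕ} (q : ℕ) (Vp : Fin t → Finset α) (X : Finset α) (i : Fin t) : Option ℕ :=
  if q ≤ sig Vp X i ∧ sig Vp X i ≤ (Vp i).card - q then none else some (sig Vp X i)

/-- A predicate on subsets of `V` is shape-invariant if any two subsets with the same
shape either both satisfy it or both fail it. -/
def ShapeInvariant {t : ℕ} (q : ℕ) (Vp : Fin t → Finset α) (P : Finset α → Prop) : Prop :=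
  ∀ X Y : Finset α, shapeOf q Vp X = shapeOf q Vp Y → (P X ↔ P Y)

/-- `TJSeq P seq ℓ S S'` : the sequence `seq 0, …, seq ℓ` is a TJ(P)-sequence from
`S` to `S'` (of length `ℓ`): consecutive sets differ by a single token jump and
all sets satisfy `P`. -/
def TJSeq (P : Finset α → Prop) (seq : ℕ → Finset α) (ℓ : ℕ) (S S' : Finset α) : Prop :=
  seq 0 = S ∧ seq ℓ = S' ∧ (∀ i ≤ ℓ, P (seq i)) ∧
    ∀ i < ℓ, (seq i \ seq (i + 1)).card = 1 ∧ (seq (i + 1) \ seq i).card = 1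

/-- A shape `σ` is `k`-feasible (w.r.t. `P`) if some set of cardinality `k` with
shape `σ` satisfies `P`. -/
def KFeasible {t : ℕ} (q : ℕ) (Vp : Fin t → Finset α) (P : Finset α → Prop)
    (k : ℕ) (σ : Fin t → Option ℕ) : Prop :=
  ∃ X : Finset α, X.card = k ∧ shapeOf q Vp X = σ ∧ P X

/-- Conditions A1–A3 at index `i` for the pair of shapes `(σ1, σ2)`. -/
def Acond {t : ℕ} (q : ℕ) (Vp : Fin t → Finset α)
    (σ1 σ2 : Fin t → Option ℕ) (i : Fin t) : Prop :=
  (∃ a b, σ1 i = some a ∧ σ2 i = some b ∧ b + 1 = a) ∨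
  (σ1 i = none ∧ σ2 i = some (q - 1)) ∨
  (σ1 i = some ((Vp i).card - q + 1) ∧ σ2 i = none)

/-- Conditions B1–B3 at index `j` for the pair of shapes `(σ1, σ2)`. -/
def Bcond {t : ℕ} (q : ℕ) (Vp : Fin t → Finset α)
    (σ1 σ2 : Fin t → Option ℕ) (j : Fin t) : Prop :=
  (∃ a b, σ1 j = some a ∧ σ2 j = some b ∧ a + 1 = b) ∨
  (σ2 j = none ∧ σ1 j = some (q - 1)) ∨
  (σ2 j = some ((Vp j).card - q + 1) ∧ σ1 j = none)

/-- Condition (2) of adjacency: a witness of size `k` and shape `σ1` with the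
prescribed signatures at the (possibly undefined) designated indices `oi`, `oj`. -/
def Cond2 {t : ℕ} (q : ℕ) (Vp : Fin t → Finset α) (k : ℕ)
    (σ1 : Fin t → Option ℕ) (oi oj : Option (Fin t)) : Prop :=
  ∃ S1 : Finset α, S1.card = k ∧ shapeOf q Vp S1 = σ1 ∧
    (∀ i, oi = some i → σ1 i = none → sig Vp S1 i = q) ∧
    (∀ j, oj = some j → σ1 j = none → sig Vp S1 j = (Vp j).card - q)

/-- Condition (3) of adjacency: a witness of size `k` and shape `σ2` with the
prescribed signatures at the (possibly undefined) designated indices `oi`, `oj`. -/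
def Cond3 {t : ℕ} (q : ℕ) (Vp : Fin t → Finset α) (k : ℕ)
    (σ2 : Fin t → Option ℕ) (oi oj : Option (Fin t)) : Prop :=
  ∃ S2 : Finset α, S2.card = k ∧ shapeOf q Vp S2 = σ2 ∧
    (∀ i, oi = some i → σ2 i = none → sig Vp S2 i = (Vp i).card - q) ∧
    (∀ j, oj = some j → σ2 j = none → sig Vp S2 j = q)

/-- The adjacency conditions (1)–(3) for two shapes: either they disagree at exactly
two indices `i` (satisfying A1–A3) and `j` (satisfying B1–B3), or they disagree at
exactly one index, which satisfies A1–A3 (called `i`) or B1–B3 (called `j`);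
in all cases the witnesses required by conditions (2) and (3) exist. -/
def ShapeAdj {t : ℕ} (q : ℕ) (Vp : Fin t → Finset α) (k : ℕ)
    (σ1 σ2 : Fin t → Option ℕ) : Prop :=
  (∃ i j : Fin t, i ≠ j ∧ (∀ h, σ1 h ≠ σ2 h ↔ (h = i ∨ h = j)) ∧
    Acond q Vp σ1 σ2 i ∧ Bcond q Vp σ1 σ2 j ∧
    Cond2 q Vp k σ1 (some i) (some j) ∧ Cond3 q Vp k σ2 (some i) (some j)) ∨
  (∃ i : Fin t, (∀ h, σ1 h ≠ σ2 h ↔ h = i) ∧ Acond q Vp σ1 σ2 i ∧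
    Cond2 q Vp k σ1 (some i) none ∧ Cond3 q Vp k σ2 (some i) none) ∨
  (∃ j : Fin t, (∀ h, σ1 h ≠ σ2 h ↔ h = j) ∧ Bcond q Vp σ1 σ2 j ∧
    Cond2 q Vp k σ1 none (some j) ∧ Cond3 q Vp k σ2 none (some j))

/-- Adjacency in the size-`k` shape graph `S_k`: the vertices are the `k`-feasible
shapes, and two distinct vertices are joined iff the adjacency conditions hold. -/
def GraphAdj {t : ℕ} (q : ℕ) (Vp : Fin t → Finset α) (P : Finset α → Prop)
    (k : ℕ) (σ1 σ2 : Fin t → Option ℕ) : Prop :=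
  σ1 ≠ σ2 ∧ KFeasible q Vp P k σ1 ∧ KFeasible q Vp P k σ2 ∧ ShapeAdj q Vp k σ1 σ2

/-- `ShapeSeqOf q Vp seq ℓ σs m` : `σs 0, …, σs m` is the shape sequence of the
TJ-sequence `seq 0, …, seq ℓ`, i.e. the sequence can be split into `m + 1`
consecutive nonempty blocks (described by the monotone block-index function `b`)
such that every set in the `j`-th block has shape `σs j`, and consecutive shapes
in `σs` differ. -/
def ShapeSeqOf {t : ℕ} (q : ℕ) (Vp : Fin t → Finset α) (seq : ℕ → Finset α)
    (ℓ : ℕ) (σs : ℕ → Fin t → Option ℕ) (m : ℕ) : Prop :=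
  ∃ b : ℕ → ℕ, b 0 = 0 ∧ b ℓ = m ∧
    (∀ i < ℓ, b (i + 1) = b i ∨ b (i + 1) = b i + 1) ∧
    (∀ i ≤ ℓ, shapeOf q Vp (seq i) = σs (b i)) ∧
    (∀ j < m, σs j ≠ σs (j + 1))

/-!
Take a TJ(P)-sequence of minimum length that, among those, changes shape the fewest times.
Two sets `X`, `Y` of the same size and shape are joined by `|X \ Y|` token jumps that never leave
their shape: move a token of `X \ Y` to `Y \ X` inside its own type if `Y` has at least as many
tokens of that type, and otherwise into a type where `Y` has more tokens than `X`. In the latter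
case both types are at `⊤` in the common shape (the signatures differ while the shapes agree),
and the counts move towards those of `Y`, so they stay in the `⊤` range.
If a shape occurred twice in the shape sequence, splicing such a route between the two
occurrences would give a sequence that is no longer and changes shape fewer times.
Consecutive shapes are adjacent because a token jump lowers one signature entry by one and raises
another by one; the two sets around the jump witness conditions (2) and (3).
-/

open Finset

section Sequences

variable {β : Type*}

def changeCount [DecidableEq β] (f : ℕ → β) (n : ℕ) : ℕ :=
  ∑ k ∈ range n, if f k = f (k + 1) then 0 else 1

def seqAppend (s : ℕ → β) (a : ℕ) (r : ℕ → β) (n : ℕ) : β :=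
  if n ≤ a then s n else r (n - a)

lemma seqAppend_of_le {s r : ℕ → β} {a n : ℕ} (h : n ≤ a) : seqAppend s a r n = s n :=
  if_pos h

lemma seqAppend_add {s r : ℕ → β} {a : ℕ} (h : s a = r 0) (n : ℕ) :
    seqAppend s a r (a + n) = r n := by
  rcases n with _ | n
  · simp [seqAppend, h]
  · simp [seqAppend]

lemma exists_lex_minimal (R : β → ℕ → Prop) (c : β → ℕ → ℕ) (h : ∃ x ℓ, R x ℓ) :
    ∃ x ℓ, R x ℓ ∧ (∀ x' ℓ', R x' ℓ' → ℓ ≤ ℓ') ∧ ∀ x', R x' ℓ → c x ℓ ≤ c x' ℓ := by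
  classical
  have hℓ : ∃ ℓ, ∃ x, R x ℓ := let ⟨x, ℓ, hx⟩ := h; ⟨ℓ, x, hx⟩
  have hc : ∃ m, ∃ x, R x (Nat.find hℓ) ∧ c x (Nat.find hℓ) = m :=
    let ⟨x, hx⟩ := Nat.find_spec hℓ; ⟨_, x, hx, rfl⟩
  obtain ⟨x, hx, hxc⟩ := Nat.find_spec hc
  exact ⟨x, _, hx, fun x' ℓ' h' => Nat.find_min' hℓ ⟨x', h'⟩,
    fun x' h' => hxc ▸ Nat.find_min' hc ⟨x', h', rfl⟩⟩

variable [DecidableEq β] {f g : ℕ → β}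

@[simp] lemma changeCount_zero : changeCount f 0 = 0 := by simp [changeCount]

lemma changeCount_succ (n : ℕ) :
    changeCount f (n + 1) = changeCount f n + if f n = f (n + 1) then 0 else 1 :=
  sum_range_succ _ _

lemma changeCount_succ_eq_or (n : ℕ) :
    changeCount f (n + 1) = changeCount f n ∨ changeCount f (n + 1) = changeCount f n + 1 := by
  rw [changeCount_succ]; split_ifs <;> simp

lemma changeCount_mono : Monotone (changeCount f) :=
  monotone_nat_of_le_succ fun n => by rw [changeCount_succ]; omega

lemma changeCount_add (a b : ℕ) :
    changeCount f (a + b) = changeCount f a + changeCount (fun n => f (a + n)) b := by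
  simp only [changeCount, sum_range_add, add_assoc]

lemma changeCount_congr {n : ℕ} (h : ∀ k ≤ n, f k = g k) :
    changeCount f n = changeCount g n :=
  sum_congr rfl fun k hk => by rw [mem_range] at hk; rw [h k hk.le, h (k + 1) hk]

lemma changeCount_eq_zero {n : ℕ} (h : ∀ k ≤ n, f k = f 0) : changeCount f n = 0 :=
  sum_eq_zero fun k hk => by rw [mem_range] at hk; rw [h k hk.le, h (k + 1) hk, if_pos rfl]

lemma eq_of_changeCount_eq {i j : ℕ} (hij : i ≤ j) (h : changeCount f j = changeCount f i) :
    f j = f i := by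
  induction j, hij using Nat.le_induction with
  | base => rfl
  | succ j hij ih =>
    have hmono := changeCount_mono (f := f) hij
    rw [changeCount_succ] at h
    split_ifs at h with hj
    · rw [← hj]; exact ih (by omega)
    · omega

lemma changeCount_factorsThrough : f.FactorsThrough (changeCount f) := fun i j h => by
  rcases le_total i j with hij | hij
  exacts [(eq_of_changeCount_eq hij h.symm).symm, eq_of_changeCount_eq hij h]

lemma exists_changeCount_eq_of_lt {j ℓ : ℕ} (h : j < changeCount f ℓ) :
    ∃ n < ℓ, changeCount f n = j ∧ f n ≠ f (n + 1) := by
  induction ℓ with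
  | zero => simp at h
  | succ ℓ ih =>
    by_cases hj : j < changeCount f ℓ
    · obtain ⟨n, hn, h'⟩ := ih hj
      exact ⟨n, by omega, h'⟩
    · rw [changeCount_succ] at h
      split_ifs at h with hℓ
      · omega
      · exact ⟨ℓ, by omega, by omega, hℓ⟩

lemma exists_changeCount_eq {j ℓ : ℕ} (h : j ≤ changeCount f ℓ) :
    ∃ n ≤ ℓ, changeCount f n = j := by
  rcases h.lt_or_eq with h | rfl
  · obtain ⟨n, hn, rfl, -⟩ := exists_changeCount_eq_of_lt h
    exact ⟨n, hn.le, rfl⟩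
  · exact ⟨ℓ, le_rfl, rfl⟩

lemma injOn_extend_changeCount {ℓ : ℕ}
    (h : ∀ i ≤ ℓ, ∀ i' ≤ ℓ, f i = f i' → changeCount f i = changeCount f i') :
    Set.InjOn (Function.extend (changeCount f) f f) (Set.Iic (changeCount f ℓ)) := by
  intro j hj j' hj' heq
  obtain ⟨n, hn, rfl⟩ := exists_changeCount_eq hj
  obtain ⟨n', hn', rfl⟩ := exists_changeCount_eq hj'
  rw [changeCount_factorsThrough.extend_apply, changeCount_factorsThrough.extend_apply] at heq
  exact h n hn n' hn' heq

lemma changeCount_comp_seqAppend {γ : Type*} (F : γ → β) {s r : ℕ → γ} {a : ℕ} (b : ℕ)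
    (h : s a = r 0) :
    changeCount (F ∘ seqAppend s a r) (a + b) = changeCount (F ∘ s) a + changeCount (F ∘ r) b := by
  rw [changeCount_add]
  congr 1
  · exact changeCount_congr fun k hk => congrArg F (seqAppend_of_le hk)
  · exact changeCount_congr fun k _ => congrArg F (seqAppend_add h k)

end Sequences

section TokenJumping

variable {V : Type*} [DecidableEq V] {P Q : Finset V → Prop} {s r : ℕ → Finset V}
  {ℓ : ℕ} {X Y Z : Finset V}

namespace TJSeq

lemma mono (h : TJSeq P s ℓ X Y) (hPQ : ∀ Z, P Z → Q Z) : TJSeq Q s ℓ X Y :=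
  ⟨h.1, h.2.1, fun i hi => hPQ _ (h.2.2.1 i hi), h.2.2.2⟩

lemma take (h : TJSeq P s ℓ X Y) {p : ℕ} (hp : p ≤ ℓ) : TJSeq P s p X (s p) :=
  ⟨h.1, rfl, fun i hi => h.2.2.1 i (hi.trans hp), fun i hi => h.2.2.2 i (by omega)⟩

lemma drop (h : TJSeq P s ℓ X Y) {p : ℕ} (hp : p ≤ ℓ) :
    TJSeq P (fun n => s (p + n)) (ℓ - p) (s p) Y :=
  ⟨rfl, by simp only [Nat.add_sub_cancel' hp, h.2.1], fun i hi => h.2.2.1 _ (by omega),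
    fun i hi => h.2.2.2 (p + i) (by omega)⟩

lemma append {a b : ℕ} (h₁ : TJSeq P s a X Y) (h₂ : TJSeq P r b Y Z) :
    TJSeq P (seqAppend s a r) (a + b) X Z := by
  have hglue : s a = r 0 := h₁.2.1.trans h₂.1.symm
  refine ⟨(seqAppend_of_le a.zero_le).trans h₁.1, (seqAppend_add hglue b).trans h₂.2.1,
    fun i hi => ?_, fun i hi => ?_⟩
  · rcases le_or_gt i a with hia | hia
    · rw [seqAppend_of_le hia]; exact h₁.2.2.1 i hia
    · obtain ⟨n, rfl⟩ := Nat.exists_eq_add_of_le hia.le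
      rw [seqAppend_add hglue]; exact h₂.2.2.1 n (by omega)
  · rcases lt_or_ge i a with hia | hia
    · rw [seqAppend_of_le hia.le, seqAppend_of_le hia]; exact h₁.2.2.2 i hia
    · obtain ⟨n, rfl⟩ := Nat.exists_eq_add_of_le hia
      rw [add_assoc, seqAppend_add hglue, seqAppend_add hglue]; exact h₂.2.2.2 n (by omega)

lemma cons (hX : P X) (h₁ : (X \ Y).card = 1) (h₂ : (Y \ X).card = 1) (h : TJSeq P s ℓ Y Z) :
    TJSeq P (fun | 0 => X | n + 1 => s n) (ℓ + 1) X Z := by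
  refine ⟨rfl, h.2.1, ?_, ?_⟩
  · rintro (_ | i) hi
    exacts [hX, h.2.2.1 i (by omega)]
  · rintro (_ | i) hi
    · change (X \ s 0).card = 1 ∧ (s 0 \ X).card = 1
      exact h.1 ▸ ⟨h₁, h₂⟩
    · exact h.2.2.2 i (by omega)

lemma card_eq (h : TJSeq P s ℓ X Y) : ∀ i ≤ ℓ, (s i).card = X.card := by
  intro i hi
  induction i with
  | zero => rw [h.1]
  | succ i ih =>
    rw [← ih (by omega), ← card_sdiff_eq_card_sdiff_iff, (h.2.2.2 i hi).1, (h.2.2.2 i hi).2]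

lemma card_sdiff_le (h : TJSeq P s ℓ X Y) {p p' : ℕ} (hpp' : p ≤ p') (hp' : p' ≤ ℓ) :
    (s p \ s p').card ≤ p' - p := by
  induction p', hpp' using Nat.le_induction with
  | base => simp
  | succ p' hpp' ih =>
    have hsub : s p \ s (p' + 1) ⊆ (s p \ s p') ∪ (s p' \ s (p' + 1)) := by
      intro x; simp only [mem_sdiff, mem_union]; tauto
    have := (card_le_card hsub).trans (card_union_le _ _)
    rw [(h.2.2.2 p' hp').1] at this
    have := ih (by omega)
    omega

end TJSeq

end TokenJumping

section Shapes

variable {V : Type*} {t q : ℕ} {Vp : Fin t → Finset V} {X Y : Finset V} {u v : V}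

lemma IsTypePartition.eq_of_mem (hVp : IsTypePartition Vp) {i j : Fin t} (hi : u ∈ Vp i)
    (hj : u ∈ Vp j) : i = j := by
  by_contra h
  exact disjoint_left.1 (hVp.2.1 i j h) hi hj

variable [DecidableEq V]

lemma IsTypePartition.sum_sig (hVp : IsTypePartition Vp) (X : Finset V) :
    ∑ i, sig Vp X i = X.card := by
  have hX : X = univ.biUnion fun i => Vp i ∩ X := by
    ext x
    simp only [mem_biUnion, mem_univ, true_and, mem_inter]
    exact ⟨fun hx => (hVp.2.2 x).imp fun _ hi => ⟨hi, hx⟩, fun ⟨_, _, hx⟩ => hx⟩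
  conv_rhs => rw [hX]
  rw [card_biUnion fun i _ j _ hij =>
    (hVp.2.1 i j hij).mono inter_subset_left inter_subset_left]
  rfl

lemma sig_insert_erase (hu : u ∈ X) (hv : v ∉ X) (h : Fin t) :
    sig Vp (insert v (X.erase u)) h + (if u ∈ Vp h then 1 else 0) =
      sig Vp X h + (if v ∈ Vp h then 1 else 0) := by
  have hv' : v ∉ Vp h ∩ X := by simp [hv]
  have hu' : u ∈ Vp h → ((Vp h ∩ X).erase u).card + 1 = (Vp h ∩ X).card := fun huh =>
    card_erase_add_one (mem_inter.2 ⟨huh, hu⟩)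
  unfold sig
  by_cases hvh : v ∈ Vp h <;> by_cases huh : u ∈ Vp h <;>
    simp [hvh, huh, inter_insert_of_mem, inter_insert_of_notMem, inter_erase,
      card_insert_of_notMem, hv', hu', mt mem_of_mem_erase hv']

lemma shapeOf_apply_eq_of_sig_between {Z : Finset V} {h : Fin t}
    (hXY : shapeOf q Vp X h = shapeOf q Vp Y h)
    (h₁ : min (sig Vp X h) (sig Vp Y h) ≤ sig Vp Z h)
    (h₂ : sig Vp Z h ≤ max (sig Vp X h) (sig Vp Y h)) :
    shapeOf q Vp Z h = shapeOf q Vp X h := by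
  unfold shapeOf at *
  split_ifs at * <;> simp_all <;> omega

lemma shapeOf_insert_erase (hu : u ∈ X) (hv : v ∉ X) (hXY : shapeOf q Vp X = shapeOf q Vp Y)
    (hout : ∀ h, u ∈ Vp h → v ∉ Vp h → sig Vp Y h < sig Vp X h)
    (hin : ∀ h, v ∈ Vp h → u ∉ Vp h → sig Vp X h < sig Vp Y h) :
    shapeOf q Vp (insert v (X.erase u)) = shapeOf q Vp X := by
  funext h
  have hsig := sig_insert_erase (Vp := Vp) hu hv h
  have hout := hout h
  have hin := hin h
  apply shapeOf_apply_eq_of_sig_between (congrFun hXY h) <;>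
    by_cases huh : u ∈ Vp h <;> by_cases hvh : v ∈ Vp h <;>
    simp only [huh, hvh, if_true, if_false, true_implies, not_true, false_implies,
      not_false_eq_true] at hsig hout hin <;> omega

lemma exists_swap_shapeOf_eq (hVp : IsTypePartition Vp) (hcard : X.card = Y.card)
    (hshape : shapeOf q Vp X = shapeOf q Vp Y) (hu : u ∈ X \ Y) :
    ∃ v ∈ Y \ X, shapeOf q Vp (insert v (X.erase u)) = shapeOf q Vp X := by
  obtain ⟨huX, huY⟩ := mem_sdiff.1 hu
  obtain ⟨i, hui⟩ := hVp.2.2 u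
  suffices ∃ v ∈ Y \ X, (∀ h, u ∈ Vp h → v ∉ Vp h → sig Vp Y h < sig Vp X h) ∧
      (∀ h, v ∈ Vp h → u ∉ Vp h → sig Vp X h < sig Vp Y h) by
    obtain ⟨v, hv, hout, hin⟩ := this
    exact ⟨v, hv, shapeOf_insert_erase huX (mem_sdiff.1 hv).2 hshape hout hin⟩
  by_cases hi : sig Vp X i ≤ sig Vp Y i
  · have : ¬ Vp i ∩ Y ⊆ Vp i ∩ X := fun hsub =>
      huY (mem_inter.1 ((eq_of_subset_of_card_le hsub hi) ▸ mem_inter.2 ⟨hui, huX⟩)).2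
    obtain ⟨v, hvY, hvX⟩ := not_subset.1 this
    rw [mem_inter] at hvY hvX
    refine ⟨v, mem_sdiff.2 ⟨hvY.2, fun h => hvX ⟨hvY.1, h⟩⟩, fun h huh hvh => ?_,
      fun h hvh huh => ?_⟩
    · exact absurd (hVp.eq_of_mem hui huh ▸ hvY.1) hvh
    · exact absurd (hVp.eq_of_mem hvY.1 hvh ▸ hui) huh
  · obtain ⟨j, hj⟩ : ∃ j, sig Vp X j < sig Vp Y j := by
      by_contra! hle
      have := sum_lt_sum (fun h _ => hle h) ⟨i, mem_univ i, not_le.1 hi⟩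
      rw [hVp.sum_sig, hVp.sum_sig] at this
      omega
    obtain ⟨v, hvY, hvX⟩ := exists_mem_notMem_of_card_lt_card hj
    rw [mem_inter] at hvY hvX
    refine ⟨v, mem_sdiff.2 ⟨hvY.2, fun h => hvX ⟨hvY.1, h⟩⟩, fun h huh _ => ?_,
      fun h hvh _ => ?_⟩
    · exact hVp.eq_of_mem hui huh ▸ not_le.1 hi
    · exact hVp.eq_of_mem hvY.1 hvh ▸ hj

lemma sdiff_insert_erase_self (hu : u ∈ X) (hv : v ∉ X) : X \ insert v (X.erase u) = {u} := by
  ext x; simp only [mem_sdiff, mem_insert, mem_erase, mem_singleton]; grind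

lemma insert_erase_sdiff_self (hv : v ∉ X) : insert v (X.erase u) \ X = {v} := by
  ext x; simp only [mem_sdiff, mem_insert, mem_erase, mem_singleton]; grind

lemma insert_erase_sdiff (hv : v ∈ Y) : insert v (X.erase u) \ Y = (X \ Y).erase u := by
  ext x; simp only [mem_sdiff, mem_insert, mem_erase]; grind

lemma exists_TJSeq_shapeOf_eq (hVp : IsTypePartition Vp) (hcard : X.card = Y.card)
    (hshape : shapeOf q Vp X = shapeOf q Vp Y) :
    ∃ r, TJSeq (fun Z => shapeOf q Vp Z = shapeOf q Vp X) r (X \ Y).card X Y := by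
  induction hd : (X \ Y).card generalizing X with
  | zero =>
    have hXY : X = Y := eq_of_subset_of_card_le (sdiff_eq_empty_iff_subset.1 (card_eq_zero.1 hd))
      hcard.ge
    exact ⟨fun _ => X, rfl, hXY, fun _ _ => rfl, fun _ hi => absurd hi (Nat.not_lt_zero _)⟩
  | succ d ih =>
    obtain ⟨u, hu⟩ : (X \ Y).Nonempty := card_pos.1 (by omega)
    obtain ⟨v, hv, hshape'⟩ := exists_swap_shapeOf_eq hVp hcard hshape hu
    obtain ⟨hvY, hvX⟩ := mem_sdiff.1 hv
    have h₁ := sdiff_insert_erase_self (mem_sdiff.1 hu).1 hvX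
    have h₂ := insert_erase_sdiff_self (u := u) hvX
    have hcard' : (insert v (X.erase u)).card = Y.card := by
      rw [← hcard, ← card_sdiff_eq_card_sdiff_iff, h₁, h₂, card_singleton, card_singleton]
    obtain ⟨r, hr⟩ := ih hcard' (hshape'.trans hshape)
      (by rw [insert_erase_sdiff hvY, card_erase_of_mem hu, hd, Nat.add_sub_cancel])
    exact ⟨_, (hr.mono fun Z hZ => hZ.trans hshape').cons rfl (by simp [h₁]) (by simp [h₂])⟩

end Shapes

section Adjacency

variable {V : Type*} {t q : ℕ} {Vp : Fin t → Finset V} {σ₁ σ₂ : Fin t → Option ℕ} {i : Fin t}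

lemma Acond.ne (h : Acond q Vp σ₁ σ₂ i) : σ₁ i ≠ σ₂ i := by
  rcases h with ⟨a, b, ha, hb, hab⟩ | ⟨ha, hb⟩ | ⟨ha, hb⟩ <;> rw [ha, hb] <;> simp
  omega

lemma Bcond.ne (h : Bcond q Vp σ₁ σ₂ i) : σ₁ i ≠ σ₂ i := by
  rcases h with ⟨a, b, ha, hb, hab⟩ | ⟨ha, hb⟩ | ⟨ha, hb⟩ <;> rw [ha, hb] <;> simp
  omega

variable [DecidableEq V] {A B : Finset V}

lemma shapeOf_eq_or_acond (h : sig Vp A i = sig Vp B i + 1) :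
    shapeOf q Vp A i = shapeOf q Vp B i ∨
      Acond q Vp (shapeOf q Vp A) (shapeOf q Vp B) i ∧
        (shapeOf q Vp A i = none → sig Vp A i = q) ∧
        (shapeOf q Vp B i = none → sig Vp B i = (Vp i).card - q) := by
  unfold Acond shapeOf
  split_ifs <;> simp <;> omega

lemma shapeOf_eq_or_bcond (h : sig Vp B i = sig Vp A i + 1) :
    shapeOf q Vp A i = shapeOf q Vp B i ∨
      Bcond q Vp (shapeOf q Vp A) (shapeOf q Vp B) i ∧
        (shapeOf q Vp A i = none → sig Vp A i = (Vp i).card - q) ∧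
        (shapeOf q Vp B i = none → sig Vp B i = q) := by
  unfold Bcond shapeOf
  split_ifs <;> simp <;> omega

lemma exists_eq_insert_erase_of_card_sdiff (h₁ : (A \ B).card = 1) (h₂ : (B \ A).card = 1) :
    ∃ u ∈ A, ∃ v ∉ A, B = insert v (A.erase u) := by
  obtain ⟨u, hu⟩ := card_eq_one.1 h₁
  obtain ⟨v, hv⟩ := card_eq_one.1 h₂
  refine ⟨u, (mem_sdiff.1 (hu ▸ mem_singleton_self u)).1, v,
    (mem_sdiff.1 (hv ▸ mem_singleton_self v)).2, ?_⟩
  ext x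
  have hux := Finset.ext_iff.1 hu x
  have hvx := Finset.ext_iff.1 hv x
  simp only [mem_sdiff, mem_singleton, mem_insert, mem_erase] at hux hvx ⊢
  tauto

lemma exists_sig_step (hVp : IsTypePartition Vp) (h₁ : (A \ B).card = 1)
    (h₂ : (B \ A).card = 1) (hne : shapeOf q Vp A ≠ shapeOf q Vp B) :
    ∃ i j, i ≠ j ∧ sig Vp A i = sig Vp B i + 1 ∧ sig Vp B j = sig Vp A j + 1 ∧
      ∀ h, shapeOf q Vp A h ≠ shapeOf q Vp B h → h = i ∨ h = j := by
  obtain ⟨u, huA, v, hvA, rfl⟩ := exists_eq_insert_erase_of_card_sdiff h₁ h₂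
  have hsig := sig_insert_erase (Vp := Vp) huA hvA
  have hshape : ∀ h, (u ∈ Vp h ↔ v ∈ Vp h) →
      shapeOf q Vp A h = shapeOf q Vp (insert v (A.erase u)) h := by
    intro h huv
    have hsigh := hsig h
    simp only [huv, add_left_inj] at hsigh
    unfold shapeOf
    rw [hsigh]
  obtain ⟨i, hui⟩ := hVp.2.2 u
  obtain ⟨j, hvj⟩ := hVp.2.2 v
  have hij : i ≠ j := by
    rintro rfl
    exact hne (funext fun h => hshape h
      ⟨fun huh => hVp.eq_of_mem hui huh ▸ hvj, fun hvh => hVp.eq_of_mem hvj hvh ▸ hui⟩)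
  refine ⟨i, j, hij, ?_, ?_, fun h hh => ?_⟩
  · have := hsig i
    rwa [if_pos hui, if_neg fun hvi => hij (hVp.eq_of_mem hvi hvj), add_zero, eq_comm] at this
  · have := hsig j
    rwa [if_pos hvj, if_neg fun huj => hij (hVp.eq_of_mem hui huj), add_zero] at this
  · by_contra! hc
    exact hh (hshape h (iff_of_false (fun huh => hc.1 (hVp.eq_of_mem huh hui))
      (fun hvh => hc.2 (hVp.eq_of_mem hvh hvj))))

lemma shapeAdj_of_step (hVp : IsTypePartition Vp) (h₁ : (A \ B).card = 1)
    (h₂ : (B \ A).card = 1) (hne : shapeOf q Vp A ≠ shapeOf q Vp B) :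
    ShapeAdj q Vp A.card (shapeOf q Vp A) (shapeOf q Vp B) := by
  have hcard : B.card = A.card := (card_sdiff_eq_card_sdiff_iff.1 (h₁.trans h₂.symm)).symm
  obtain ⟨i, j, hij, hsigi, hsigj, hdiff⟩ := exists_sig_step hVp h₁ h₂ hne
  rcases shapeOf_eq_or_acond (q := q) hsigi with hi | ⟨hAi, hAi₁, hAi₂⟩ <;>
    rcases shapeOf_eq_or_bcond (q := q) hsigj with hj | ⟨hBj, hBj₁, hBj₂⟩
  · refine absurd (funext fun h => ?_) hne
    by_contra hh
    rcases hdiff h hh with rfl | rfl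
    exacts [hh hi, hh hj]
  · refine Or.inr (Or.inr ⟨j, fun h => ⟨fun hh => (hdiff h hh).resolve_left ?_, ?_⟩, hBj,
      ⟨A, rfl, rfl, by rintro _ ⟨⟩, by rintro _ ⟨⟩; exact hBj₁⟩,
      ⟨B, hcard, rfl, by rintro _ ⟨⟩, by rintro _ ⟨⟩; exact hBj₂⟩⟩)
    · rintro rfl; exact hh hi
    · rintro rfl; exact hBj.ne
  · refine Or.inr (Or.inl ⟨i, fun h => ⟨fun hh => (hdiff h hh).resolve_right ?_, ?_⟩, hAi,
      ⟨A, rfl, rfl, by rintro _ ⟨⟩; exact hAi₁, by rintro _ ⟨⟩⟩,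
      ⟨B, hcard, rfl, by rintro _ ⟨⟩; exact hAi₂, by rintro _ ⟨⟩⟩⟩)
    · rintro rfl; exact hh hj
    · rintro rfl; exact hAi.ne
  · refine Or.inl ⟨i, j, hij, fun h => ⟨hdiff h, ?_⟩, hAi, hBj,
      ⟨A, rfl, rfl, by rintro _ ⟨⟩; exact hAi₁, by rintro _ ⟨⟩; exact hBj₁⟩,
      ⟨B, hcard, rfl, by rintro _ ⟨⟩; exact hAi₂, by rintro _ ⟨⟩; exact hBj₂⟩⟩
    rintro (rfl | rfl)
    exacts [hAi.ne, hBj.ne]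

end Adjacency

section Reconfiguration

variable {V : Type*} [DecidableEq V] {t q : ℕ} {Vp : Fin t → Finset V} {P : Finset V → Prop}
  {seq : ℕ → Finset V} {ℓ : ℕ} {S S' : Finset V}

/-- Splice a shape-preserving route between `seq p` and `seq p'`: minimality of the length forces
the route to be exactly as long as the segment it replaces, and then minimality of the number of
shape changes forbids a shape change between `p` and `p'`. -/
lemma changeCount_eq_of_shapeOf_eq (hVp : IsTypePartition Vp) (hP : ShapeInvariant q Vp P)
    (hseq : TJSeq P seq ℓ S S') (hlen : ∀ seq' ℓ', TJSeq P seq' ℓ' S S' → ℓ ≤ ℓ')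
    (hmin : ∀ seq', TJSeq P seq' ℓ S S' →
      changeCount (shapeOf q Vp ∘ seq) ℓ ≤ changeCount (shapeOf q Vp ∘ seq') ℓ)
    {p p' : ℕ} (hpp' : p ≤ p') (hp' : p' ≤ ℓ)
    (hshape : shapeOf q Vp (seq p) = shapeOf q Vp (seq p')) :
    changeCount (shapeOf q Vp ∘ seq) p' = changeCount (shapeOf q Vp ∘ seq) p := by
  have hp := hpp'.trans hp'
  obtain ⟨r, hr⟩ := exists_TJSeq_shapeOf_eq hVp
    ((hseq.card_eq p hp).trans (hseq.card_eq p' hp').symm) hshape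
  set d := (seq p \ seq p').card
  have hd : d ≤ p' - p := hseq.card_sdiff_le hpp' hp'
  have hnew := ((hseq.take hp).append
    (hr.mono fun Z hZ => (hP _ _ hZ).2 (hseq.2.2.1 p hp))).append (hseq.drop hp')
  have hℓ : p + d + (ℓ - p') = ℓ := by have := hlen _ _ hnew; omega
  have hcount : changeCount (shapeOf q Vp ∘ seqAppend (seqAppend seq p r) (p + d)
        fun n => seq (p' + n)) (p + d + (ℓ - p')) =
      changeCount (shapeOf q Vp ∘ seq) p +
        changeCount (shapeOf q Vp ∘ fun n => seq (p' + n)) (ℓ - p') := by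
    rw [changeCount_comp_seqAppend _ _ ((seqAppend_add hr.1.symm d).trans hr.2.1),
      changeCount_comp_seqAppend _ _ hr.1.symm,
      changeCount_eq_zero (f := shapeOf q Vp ∘ r)
        fun k hk => (hr.2.2.1 k hk).trans (congrArg _ hr.1).symm, add_zero]
  have htotal : changeCount (shapeOf q Vp ∘ seq) ℓ = changeCount (shapeOf q Vp ∘ seq) p' +
      changeCount (shapeOf q Vp ∘ fun n => seq (p' + n)) (ℓ - p') := by
    have := changeCount_add (f := shapeOf q Vp ∘ seq) p' (ℓ - p')
    rwa [Nat.add_sub_cancel' hp'] at this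
  have := hmin _ (hℓ ▸ hnew)
  have := changeCount_mono (f := shapeOf q Vp ∘ seq) hpp'
  rw [hℓ] at hcount
  omega

end Reconfiguration

theorem stmt3_general {t q : ℕ} (Vp : Fin t → Finset α)
    (hVp : IsTypePartition Vp) (P : Finset α → Prop) (hP : ShapeInvariant q Vp P)
    (k : ℕ) (S S' : Finset α) (hkS : S.card = k)
    (hex : ∃ (seq : ℕ → Finset α) (ℓ : ℕ), TJSeq P seq ℓ S S') :
    ∃ (seq : ℕ → Finset α) (ℓ : ℕ), TJSeq P seq ℓ S S' ∧
      (∀ (seq' : ℕ → Finset α) (ℓ' : ℕ), TJSeq P seq' ℓ' S S' → ℓ ≤ ℓ') ∧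
      ∃ (σs : ℕ → Fin t → Option ℕ) (m : ℕ), ShapeSeqOf q Vp seq ℓ σs m ∧
        (∀ j j', j ≤ m → j' ≤ m → j ≠ j' → σs j ≠ σs j') ∧
        (∀ j < m, GraphAdj q Vp P k (σs j) (σs (j + 1))) := by
  obtain ⟨seq, ℓ, hseq, hlen, hmin⟩ := exists_lex_minimal (fun s ℓ => TJSeq P s ℓ S S')
    (fun s ℓ => changeCount (shapeOf q Vp ∘ s) ℓ) hex
  set F := shapeOf q Vp ∘ seq
  have hblock : ∀ i ≤ ℓ, ∀ i' ≤ ℓ, F i = F i' → changeCount F i = changeCount F i' := by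
    intro i hi i' hi' h
    rcases le_total i i' with hii' | hii'
    exacts [(changeCount_eq_of_shapeOf_eq hVp hP hseq hlen hmin hii' hi' h).symm,
      changeCount_eq_of_shapeOf_eq hVp hP hseq hlen hmin hii' hi h.symm]
  set σs := Function.extend (changeCount F) F F
  have hσs : ∀ i, σs (changeCount F i) = F i := changeCount_factorsThrough.extend_apply F
  have hdistinct : ∀ j j', j ≤ changeCount F ℓ → j' ≤ changeCount F ℓ → j ≠ j' →
      σs j ≠ σs j' := fun j j' hj hj' hne heq => hne (injOn_extend_changeCount hblock hj hj' heq)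
  refine ⟨seq, ℓ, hseq, hlen, σs, changeCount F ℓ, ⟨changeCount F, changeCount_zero, rfl,
    fun i _ => changeCount_succ_eq_or i, fun i _ => (hσs i).symm,
    fun j hj => hdistinct j (j + 1) hj.le hj (by omega)⟩, hdistinct, fun j hj => ?_⟩
  obtain ⟨n, hn, rfl, hstep⟩ := exists_changeCount_eq_of_lt hj
  have hsucc : changeCount F (n + 1) = changeCount F n + 1 := by
    rw [changeCount_succ, if_neg hstep]
  have hcard : (seq n).card = k := (hseq.card_eq n hn.le).trans hkS
  rw [← hsucc, hσs, hσs]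
  exact ⟨hstep, ⟨seq n, hcard, rfl, hseq.2.2.1 n hn.le⟩,
    ⟨seq (n + 1), (hseq.card_eq _ hn).trans hkS, rfl, hseq.2.2.1 _ hn⟩,
    hcard ▸ shapeAdj_of_step hVp (hseq.2.2.2 n hn).1 (hseq.2.2.2 n hn).2 hstep⟩

/-- If some TJ(P)-sequence from `S` to `S'` exists, then there is one
of minimum length whose shape sequence consists of pairwise distinct shapes with
consecutive ones adjacent in the size-`k` shape graph (a simple path in `S_k`). -/
theorem stmt3 {t q : ℕ} (hq : 1 ≤ q) (Vp : Fin t → Finset α)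
    (hVp : IsTypePartition Vp) (P : Finset α → Prop) (hP : ShapeInvariant q Vp P)
    (k : ℕ) (S S' : Finset α) (hS : P S) (hS' : P S')
    (hkS : S.card = k) (hkS' : S'.card = k)
    (hex : ∃ (seq : ℕ → Finset α) (ℓ : ℕ), TJSeq P seq ℓ S S') :
    ∃ (seq : ℕ → Finset α) (ℓ : ℕ), TJSeq P seq ℓ S S' ∧
      (∀ (seq' : ℕ → Finset α) (ℓ' : ℕ), TJSeq P seq' ℓ' S S' → ℓ ≤ ℓ') ∧
      ∃ (σs : ℕ → Fin t → Option ℕ) (m : ℕ), ShapeSeqOf q Vp seq ℓ σs m ∧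
        (∀ j j', j ≤ m → j' ≤ m → j ≠ j' → σs j ≠ σs j') ∧
        (∀ j < m, GraphAdj q Vp P k (σs j) (σs (j + 1))) :=
  stmt3_general Vp hVp P hP k S S' hkS hex
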